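/- arXiv:2107.14276 — 3 statements merged into one kernel-verified Lean document; each statement's English description precedes it below -/
import Mathlib

section
/- Let (R,M) be a discrete valuation domain with finite residue field and valuation v, and let S ⊆ R be a balanced set. Then there exist positive integers (m_s)_{s∈S} and a non-negative integer e such that the polynomial f = ∏_{s∈S}(x−s)^{m_s} satisfies v(f(r)) = e for every r lying in any S-poor neighborhood of the partition C_S. -/
open Polynomial

section Defs

variable (R K : Type*)

/-- `Int(R) = {F ∈ K[x] ∣ F(R) ⊆ R}`, the ring of integer-valued polynomials,
as a subring of `K[x]`. -/
def intPoly [CommRing R] [CommRing K] [Algebra R K] : Subring (Polynomial K) where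
  carrier := {F | ∀ r : R, ∃ a : R, F.eval (algebraMap R K r) = algebraMap R K a}
  mul_mem' := by
    rintro f g hf hg r
    obtain ⟨a, ha⟩ := hf r
    obtain ⟨b, hb⟩ := hg r
    exact ⟨a * b, by simp [ha, hb]⟩
  one_mem' := fun r => ⟨1, by simp⟩
  add_mem' := by
    rintro f g hf hg r
    obtain ⟨a, ha⟩ := hf r
    obtain ⟨b, hb⟩ := hg r
    exact ⟨a + b, by simp [ha, hb]⟩
  zero_mem' := fun r => ⟨0, by simp⟩
  neg_mem' := by
    rintro f hf r
    obtain ⟨a, ha⟩ := hf r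
    exact ⟨-a, by simp [ha]⟩

/-- Polynomials with coefficients in `R` are integer-valued. -/
theorem map_mem_intPoly [CommRing R] [CommRing K] [Algebra R K] (f : Polynomial R) :
    f.map (algebraMap R K) ∈ intPoly R K :=
  fun r => ⟨f.eval r, by rw [Polynomial.eval_map, Polynomial.eval₂_at_apply]⟩

/-- An element `d` of a commutative monoid is absolutely irreducible if it is irreducible
and, for every `n ≥ 1`, the only factorization of `d ^ n` into irreducibles is, up to order
and unit factors, `d ⋯ d` (`n` copies). -/
def AbsolutelyIrreducible {α : Type*} [CommMonoid α] (d : α) : Prop :=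
  Irreducible d ∧ ∀ n : ℕ, 1 ≤ n → ∀ l : Multiset α, (∀ a ∈ l, Irreducible a) →
    l.prod = d ^ n → Multiset.card l = n ∧ ∀ a ∈ l, Associated a d

/-- The fixed divisor of a polynomial `f ∈ R[x]`: the ideal of `R` generated by the
values of `f` on `R`. -/
def fixDiv [CommRing R] (f : Polynomial R) : Ideal R :=
  Ideal.span (Set.range fun a => f.eval a)

/-- The fixed divisor of an integer-valued polynomial `F ∈ Int(R)`: the ideal of `R`
generated by (the elements of `R` representing) the values of `F` on `R`. -/
def fixDivK [CommRing R] [CommRing K] [Algebra R K] (F : Polynomial K) : Ideal R :=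
  Ideal.span {a : R | ∃ r : R, F.eval (algebraMap R K r) = algebraMap R K a}

/-- The (normalized additive) valuation of a nonzero element of a discrete valuation
ring: the largest `n` such that `x ∈ M ^ n`, where `M` is the maximal ideal. -/
noncomputable def mval [CommRing R] [IsLocalRing R] (x : R) : ℕ :=
  sSup {n : ℕ | x ∈ IsLocalRing.maximalIdeal R ^ n}

open scoped Classical in
/-- The valuation `v : R → ℕ∞`, with `v 0 = ⊤`. -/
noncomputable def vR [CommRing R] [IsLocalRing R] (x : R) : ℕ∞ :=
  if x = 0 then ⊤ else (mval R x : ℕ∞)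

open scoped Classical in
/-- The valuation extended to the quotient field `K`, with `v 0 = ⊤`. -/
noncomputable def vK [CommRing R] [IsLocalRing R] [CommRing K] [Algebra R K]
    [IsLocalization (nonZeroDivisors R) K] (x : K) : WithTop ℤ :=
  if x = 0 then ⊤
  else (((mval R (IsLocalization.sec (nonZeroDivisors R) x).1 : ℤ) -
        (mval R ((IsLocalization.sec (nonZeroDivisors R) x).2 : R) : ℤ) : ℤ) : WithTop ℤ)

/-- The residue class `s + M ^ n` of `s` modulo the `n`-th power of the maximal ideal. -/
def resClass [CommRing R] [IsLocalRing R] (s : R) (n : ℕ) : Set R :=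
  {x | x - s ∈ IsLocalRing.maximalIdeal R ^ n}

/-- A finite set `S ⊆ R` is balanced if, letting `n s` for each `s ∈ S` be the minimal
non-negative integer with `(s + M ^ (n s)) ∩ S = {s}`, the residue classes `s + M ^ (n s)`
(`s ∈ S`) are pairwise disjoint and cover `R`. -/
def IsBalanced [CommRing R] [IsLocalRing R] (S : Finset R) : Prop :=
  S.Nonempty ∧
  ∃ n : R → ℕ,
    (∀ s ∈ S, resClass R s (n s) ∩ (S : Set R) = {s} ∧
      ∀ k : ℕ, resClass R s k ∩ (S : Set R) = {s} → n s ≤ k) ∧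
    (∀ s ∈ S, ∀ t ∈ S, s ≠ t → Disjoint (resClass R s (n s)) (resClass R t (n t))) ∧
    (⋃ s ∈ S, resClass R s (n s)) = Set.univ

/-- `ρ` describes the `M`-adic partition `C_S` associated to `S`: the partition of `R`
into the residue classes `s + M ^ (ρ s)`, `s ∈ S`, such that each block contains both a
residue class of `M ^ (ρ s + 1)` intersecting `S` and one disjoint from `S`. -/
def IsSPartition [CommRing R] [IsLocalRing R] (S : Finset R) (ρ : R → ℕ) : Prop :=
  (⋃ s ∈ S, resClass R s (ρ s)) = Set.univ ∧
  (∀ s ∈ S, ∀ t ∈ S,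
    resClass R s (ρ s) = resClass R t (ρ t) ∨
      Disjoint (resClass R s (ρ s)) (resClass R t (ρ t))) ∧
  (∀ s ∈ S,
    (∃ u : R, resClass R u (ρ s + 1) ⊆ resClass R s (ρ s) ∧
      (resClass R u (ρ s + 1) ∩ (S : Set R)).Nonempty) ∧
    (∃ u : R, resClass R u (ρ s + 1) ⊆ resClass R s (ρ s) ∧
      resClass R u (ρ s + 1) ∩ (S : Set R) = ∅))

/-- `S'` is a balanced set associated to `S` (relative to the partition data `ρ` of `C_S`):
`S' ⊆ S` is balanced, consists of one representative per block of `C_S`, and its associated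
partition `C_{S'}` coincides with `C_S`. -/
def IsAssociatedBalancedSubset [CommRing R] [IsLocalRing R] (S S' : Finset R) (ρ : R → ℕ) :
    Prop :=
  S' ⊆ S ∧ IsBalanced R S' ∧
  (∀ s ∈ S', ∀ t ∈ S', s ≠ t → Disjoint (resClass R s (ρ s)) (resClass R t (ρ t))) ∧
  (⋃ s ∈ S', resClass R s (ρ s)) = Set.univ

open scoped Classical in
/-- The partition matrix of the partition `{s + M ^ (ρ s) : s ∈ S}`: diagonal entries
`ρ s`, off-diagonal entries `v (s - t)`. -/
noncomputable def partitionMatrix [CommRing R] [IsLocalRing R] (S : Finset R) (ρ : R → ℕ) :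
    Matrix {x // x ∈ S} {x // x ∈ S} ℤ :=
  Matrix.of fun s t =>
    if (s : R) = (t : R) then (ρ (s : R) : ℤ) else (mval R ((s : R) - (t : R)) : ℤ)

/-- `m` is the vector of multiplicities of the equalizing polynomial of `S`: the unique
vector of positive integers with gcd `1` such that `A · m = e · (1, …, 1)ᵀ` for some
non-negative integer `e`, where `A` is the partition matrix. -/
def IsEqualizingVector [CommRing R] [IsLocalRing R] (S : Finset R) (ρ : R → ℕ) (m : R → ℕ) :
    Prop :=
  (∀ s ∈ S, 0 < m s) ∧ S.gcd m = 1 ∧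
  ∃ e : ℕ, ∀ s : {x // x ∈ S},
    (∑ t : {x // x ∈ S}, partitionMatrix R S ρ s t * (m (t : R) : ℤ)) = (e : ℤ)

/-- `f` is the equalizing polynomial of `S`. -/
def IsEqualizingPoly [CommRing R] [IsLocalRing R] (S : Finset R) (f : Polynomial R) : Prop :=
  ∃ (ρ : R → ℕ) (m : R → ℕ), IsSPartition R S ρ ∧ IsEqualizingVector R S ρ m ∧
    f = ∏ s ∈ S, (Polynomial.X - Polynomial.C s) ^ m s

/-- The posh set of `f ∈ R[x]`: the set of `r ∈ R` where `v (f r)` exceeds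
`min_{t ∈ R} v (f t)`. -/
noncomputable def poshR [CommRing R] [IsLocalRing R] (f : Polynomial R) : Set R :=
  {r : R | (⨅ t : R, vR R (f.eval t)) < vR R (f.eval r)}

/-- The posh set of `F ∈ K[x]`: the set of `r ∈ R` where `v (F r)` exceeds
`min_{t ∈ R} v (F t)`. -/
def poshK [CommRing R] [IsLocalRing R] [CommRing K] [Algebra R K]
    [IsLocalization (nonZeroDivisors R) K] (F : Polynomial K) : Set R :=
  {r : R | ∃ t : R, vK R K (F.eval (algebraMap R K t)) < vK R K (F.eval (algebraMap R K r))}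

/-- `r` lies in an `S`-poor neighborhood of the partition `C_S` (described by `ρ`):
a residue class `r + M ^ (ρ s + 1)` disjoint from `S` inside a block `s + M ^ (ρ s)`. -/
def IsPoorElt [CommRing R] [IsLocalRing R] (S : Finset R) (ρ : R → ℕ) (r : R) : Prop :=
  ∃ s ∈ S, r ∈ resClass R s (ρ s) ∧ resClass R r (ρ s + 1) ∩ (S : Set R) = ∅

/-- The rich set of `S`: the union of the `S`-rich neighborhoods `s + M ^ (ρ s + 1)`,
`s ∈ S`. -/
def richSet [CommRing R] [IsLocalRing R] (S : Finset R) (ρ : R → ℕ) : Set R :=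
  ⋃ s ∈ S, resClass R s (ρ s + 1)

/-- `a` is an `M`-ordering (`P`-ordering) of `R`. -/
def IsMOrdering [CommRing R] [IsLocalRing R] (a : ℕ → R) : Prop :=
  ∀ k : ℕ, ∀ x : R,
    vR R (∏ i ∈ Finset.range k, (a k - a i)) ≤ vR R (∏ i ∈ Finset.range k, (x - a i))

end Defs

/-!
Let `n s` be the depth at which the balanced set `S` isolates `s`. Any partition `C_S` is
`{s + M ^ (n s)}`, and at a point `r` of a poor neighborhood in the block of `s` the
ultrametric inequality is strict, so `v (r - t)` is `n s` for `t = s` and `v (s - t)` otherwise.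
Hence `v (f r)` is the `s`-th entry of `A m`, `A` the partition matrix, and it suffices to find a
positive `m` with `A m` constant. Subtracting `k` from all entries, where `k` is the least
distance in `S`, makes `A - k` block diagonal along the classes of `S` modulo `M ^ (k + 1)`;
each block is handled by induction, and the solutions are rescaled to a common row sum.
-/

open IsLocalRing
open IsDiscreteValuationRing (addVal addVal_zero addVal_mul addVal_pow addVal_le_iff_dvd
  addVal_eq_top_iff exists_irreducible)

section ResidueClass

variable {R : Type*} [CommRing R] [IsLocalRing R] {x s t : R} {j k : ℕ}

theorem mem_resClass_self (s : R) (k : ℕ) : s ∈ resClass R s k := by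
  simp [resClass]

theorem mem_resClass_comm : x ∈ resClass R s k ↔ s ∈ resClass R x k := by
  simp only [resClass, Set.mem_ofPred_eq]
  rw [← neg_sub, neg_mem_iff]

theorem resClass_eq_of_mem (h : x ∈ resClass R s k) : resClass R x k = resClass R s k := by
  ext y
  simp only [resClass, Set.mem_ofPred_eq] at h ⊢
  constructor
  · intro hy
    simpa using Ideal.add_mem _ hy h
  · intro hy
    simpa using Ideal.sub_mem _ hy h

theorem resClass_eq_iff_mem : resClass R s k = resClass R t k ↔ s ∈ resClass R t k :=
  ⟨fun h => h ▸ mem_resClass_self s k, resClass_eq_of_mem⟩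

theorem mem_resClass_of_le (h : x ∈ resClass R s k) (hjk : j ≤ k) : x ∈ resClass R s j :=
  Ideal.pow_le_pow_right hjk h

end ResidueClass

section Valuation

variable {R : Type*} [CommRing R] [IsDomain R] [IsDiscreteValuationRing R]

theorem mem_maximalIdeal_pow_iff_le_addVal (x : R) (k : ℕ) :
    x ∈ maximalIdeal R ^ k ↔ (k : ℕ∞) ≤ addVal R x := by
  obtain ⟨ϖ, hϖ⟩ := exists_irreducible R
  rw [hϖ.maximalIdeal_eq, Ideal.span_singleton_pow, Ideal.mem_span_singleton,
    ← addVal_le_iff_dvd, hϖ.addVal_pow]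

theorem mval_eq_addVal {x : R} (hx : x ≠ 0) : (mval R x : ℕ∞) = addVal R x := by
  obtain ⟨N, hN⟩ := ENat.ne_top_iff_exists.mp (addVal_eq_top_iff.not.mpr hx)
  have hpow : {k | x ∈ maximalIdeal R ^ k} = Set.Iic N := by
    ext k
    simp [mem_maximalIdeal_pow_iff_le_addVal, ← hN]
  rw [mval, hpow, csSup_Iic, hN]

theorem vR_eq_addVal (x : R) : vR R x = addVal R x := by
  unfold vR
  split_ifs with hx
  · rw [hx, addVal_zero]
  · exact mval_eq_addVal hx

theorem le_mval_iff_mem_pow {x : R} (hx : x ≠ 0) (k : ℕ) :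
    k ≤ mval R x ↔ x ∈ maximalIdeal R ^ k := by
  rw [mem_maximalIdeal_pow_iff_le_addVal, ← mval_eq_addVal hx, Nat.cast_le]

theorem le_mval_sub_iff_mem_resClass {x s : R} (hxs : x ≠ s) (k : ℕ) :
    k ≤ mval R (x - s) ↔ x ∈ resClass R s k :=
  le_mval_iff_mem_pow (sub_ne_zero.mpr hxs) k

theorem le_mval_sub_iff_resClass_eq {s t : R} (hst : s ≠ t) (k : ℕ) :
    k ≤ mval R (s - t) ↔ resClass R s k = resClass R t k := by
  rw [resClass_eq_iff_mem, le_mval_sub_iff_mem_resClass hst]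

theorem exists_mem_pow_notMem_pow {j k : ℕ} (h : j < k) :
    ∃ y : R, y ∈ maximalIdeal R ^ j ∧ y ∉ maximalIdeal R ^ k := by
  obtain ⟨ϖ, hϖ⟩ := exists_irreducible R
  refine ⟨ϖ ^ j, ?_, ?_⟩ <;>
    simp [mem_maximalIdeal_pow_iff_le_addVal, hϖ.addVal_pow, h]

theorem addVal_prod_pow {ι : Type*} (S : Finset ι) (f : ι → R) (m : ι → ℕ) :
    addVal R (∏ i ∈ S, f i ^ m i) = ∑ i ∈ S, m i • addVal R (f i) := by
  induction S using Finset.cons_induction with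
  | empty => simp
  | cons a S ha ih => rw [Finset.prod_cons, Finset.sum_cons, addVal_mul, addVal_pow, ih]

theorem vR_prod_pow {ι : Type*} (S : Finset ι) (f : ι → R) (m : ι → ℕ)
    (hf : ∀ i ∈ S, f i ≠ 0) :
    vR R (∏ i ∈ S, f i ^ m i) = ((∑ i ∈ S, m i * mval R (f i) : ℕ) : ℕ∞) := by
  rw [vR_eq_addVal, addVal_prod_pow]
  push_cast
  exact Finset.sum_congr rfl fun i hi => by rw [nsmul_eq_mul, mval_eq_addVal (hf i hi)]

end Valuation

section Partition

variable {R : Type*} [CommRing R] [IsDomain R] [IsDiscreteValuationRing R]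
  {S : Finset R} {n ρ : R → ℕ} {s : R}

theorem IsSPartition.le_of_isolating_cover (hρ : IsSPartition R S ρ)
    (hsingle : ∀ s ∈ S, resClass R s (n s) ∩ S = {s})
    (hcov : ⋃ s ∈ S, resClass R s (n s) = Set.univ) (hs : s ∈ S) : n s ≤ ρ s := by
  by_contra! hlt
  obtain ⟨u, hu_sub, hu_poor⟩ := (hρ.2.2 s hs).2
  obtain ⟨t, ht, hut⟩ := Set.mem_iUnion₂.mp (hcov.superset (Set.mem_univ u))
  have hnt : n t ≤ ρ s := by
    by_contra! h
    have htu : t ∈ resClass R u (ρ s + 1) := mem_resClass_comm.1 (mem_resClass_of_le hut h)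
    exact hu_poor.subset ⟨htu, ht⟩
  have hus : u ∈ resClass R s (n t) := mem_resClass_of_le (hu_sub (mem_resClass_self u _)) hnt
  have hst : s ∈ resClass R t (n t) := by
    rw [← resClass_eq_of_mem hut, resClass_eq_of_mem hus]
    exact mem_resClass_self s _
  obtain rfl : s = t := (hsingle t ht).subset ⟨hst, hs⟩
  omega

theorem IsSPartition.le_of_isolating (hρ : IsSPartition R S ρ)
    (hsingle : ∀ s ∈ S, resClass R s (n s) ∩ S = {s}) (hs : s ∈ S) : ρ s ≤ n s := by
  by_contra! hlt
  obtain ⟨y, hy, hy'⟩ := exists_mem_pow_notMem_pow (R := R) hlt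
  have hx : y + s ∈ resClass R s (n s) := by simpa [resClass] using hy
  have hx' : y + s ∉ resClass R s (ρ s) := by simpa [resClass] using hy'
  obtain ⟨t, ht, hxt⟩ := Set.mem_iUnion₂.mp (hρ.1.superset (Set.mem_univ (y + s)))
  rcases le_or_gt (n s) (ρ t) with h | h
  · have hts : t ∈ resClass R s (n s) := by
      rw [← resClass_eq_of_mem hx, resClass_eq_of_mem (mem_resClass_of_le hxt h)]
      exact mem_resClass_self t _
    obtain rfl : t = s := (hsingle s hs).subset ⟨hts, ht⟩
    exact hx' hxt
  · have hst : s ∈ resClass R t (ρ t) := by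
      rw [← resClass_eq_of_mem hxt, resClass_eq_of_mem (mem_resClass_of_le hx h.le)]
      exact mem_resClass_self s _
    rcases hρ.2.1 s hs t ht with hblock | hdisj
    · exact hx' (hblock ▸ hxt)
    · exact Set.disjoint_left.mp hdisj (mem_resClass_self s _) hst

end Partition

section RowEqualizer

variable {α : Type*} {A : α → α → ℕ} {S : Finset α} {m : α → ℕ} {e : ℕ}

def IsRowEqualizer (A : α → α → ℕ) (S : Finset α) (m : α → ℕ) (e : ℕ) : Prop :=
  (∀ s ∈ S, 0 < m s) ∧ ∀ s ∈ S, ∑ t ∈ S, m t * A s t = e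

theorem exists_isRowEqualizer_of_subsingleton (hS : (S : Set α).Subsingleton) :
    ∃ m e, IsRowEqualizer A S m e := by
  rcases S.eq_empty_or_nonempty with rfl | ⟨s, hs⟩
  · exact ⟨1, 0, by simp [IsRowEqualizer]⟩
  · obtain rfl : S = {s} := Finset.eq_singleton_iff_unique_mem.2 ⟨hs, fun t ht => hS ht hs⟩
    exact ⟨1, A s s, by simp [IsRowEqualizer]⟩

namespace IsRowEqualizer

theorem pos (h : IsRowEqualizer A S m e) {s : α} (hs : s ∈ S) (hA : 0 < A s s) : 0 < e := by
  rw [← h.2 s hs]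
  exact (Nat.mul_pos (h.1 s hs) hA).trans_le
    (Finset.single_le_sum (f := fun t => m t * A s t) (fun _ _ => Nat.zero_le _) hs)

theorem sub_of_sub_add_one {k : ℕ} (h : IsRowEqualizer (fun s t => A s t - (k + 1)) S m e)
    (hA : ∀ s ∈ S, ∀ t ∈ S, k < A s t) :
    IsRowEqualizer (fun s t => A s t - k) S m (e + ∑ t ∈ S, m t) := by
  refine ⟨h.1, fun s hs => ?_⟩
  rw [← h.2 s hs, ← Finset.sum_add_distrib]
  refine Finset.sum_congr rfl fun t ht => ?_
  have := hA s hs t ht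
  beta_reduce
  rw [show A s t - k = A s t - (k + 1) + 1 by omega, mul_add, mul_one]

/-- Rescaling two equalizers by each other's row sum makes them agree across a block
decomposition whose off-diagonal blocks vanish. -/
theorem glue {p : α → Prop} [DecidablePred p] {m₁ m₂ : α → ℕ} {e₁ e₂ : ℕ}
    (h₁ : IsRowEqualizer A (S.filter p) m₁ e₁) (h₂ : IsRowEqualizer A (S.filter (¬ p ·)) m₂ e₂)
    (he₁ : 0 < e₁) (he₂ : 0 < e₂) (hcross : ∀ s ∈ S, ∀ t ∈ S, ¬(p s ↔ p t) → A s t = 0) :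
    IsRowEqualizer A S (fun t => if p t then e₂ * m₁ t else e₁ * m₂ t) (e₁ * e₂) := by
  refine ⟨fun s hs => ?_, fun s hs => ?_⟩
  · by_cases hps : p s
    · simpa [hps] using Nat.mul_pos he₂ (h₁.1 s (Finset.mem_filter.2 ⟨hs, hps⟩))
    · simpa [hps] using Nat.mul_pos he₁ (h₂.1 s (Finset.mem_filter.2 ⟨hs, hps⟩))
  have hzero (q : α → Prop) [DecidablePred q] (hq : ∀ t, q t → ¬(p s ↔ p t)) (m' : α → ℕ) :
      ∑ t ∈ S.filter q, m' t * A s t = 0 :=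
    Finset.sum_eq_zero fun t ht => by
      rw [Finset.mem_filter] at ht
      rw [hcross s hs t ht.1 (hq t ht.2), mul_zero]
  simp only [ite_mul, Finset.sum_ite, mul_assoc, ← Finset.mul_sum]
  by_cases hps : p s
  · rw [h₁.2 s (Finset.mem_filter.2 ⟨hs, hps⟩), hzero (¬ p ·) (by tauto), mul_zero, add_zero,
      mul_comm]
  · rw [h₂.2 s (Finset.mem_filter.2 ⟨hs, hps⟩), hzero p (by tauto), mul_zero, zero_add]

end IsRowEqualizer

end RowEqualizer

section Equalizing

variable {R : Type*} [CommRing R] [IsDomain R] [IsDiscreteValuationRing R]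

open scoped Classical in
/-- The entries of `partitionMatrix R S n`, as a function on `R × R` with values in `ℕ`. -/
noncomputable def partitionEntry (n : R → ℕ) (s t : R) : ℕ :=
  if t = s then n s else mval R (s - t)

@[simp]
theorem partitionEntry_self (n : R → ℕ) (s : R) : partitionEntry n s s = n s := by
  simp [partitionEntry]

theorem partitionEntry_of_ne (n : R → ℕ) {s t : R} (h : s ≠ t) :
    partitionEntry n s t = mval R (s - t) := by
  simp [partitionEntry, Ne.symm h]

/-- `S` is split into the class of some `s₀` modulo `M ^ (k + 1)`, solved at level `k + 1`, and
the rest, solved at level `k`; entries between the two parts are exactly `k`. The induction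
runs on `∑ s ∈ S, (n s - k)`. -/
theorem exists_isRowEqualizer_partitionEntry (n : R → ℕ) (k : ℕ) (S : Finset R)
    (hS : ∀ s ∈ S, ∀ t ∈ S, s ≠ t → k ≤ mval R (s - t) ∧ mval R (s - t) < n s) :
    ∃ m e, IsRowEqualizer (fun s t => partitionEntry n s t - k) S m e := by
  classical
  induction hμ : ∑ s ∈ S, (n s - k) using Nat.strong_induction_on generalizing k S with
  | _ μ ih =>
  by_cases hS₂ : S.Nontrivial
  swap
  · exact exists_isRowEqualizer_of_subsingleton (Set.not_nontrivial_iff.1 hS₂)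
  obtain ⟨s₀, hs₀⟩ := hS₂.nonempty
  have hk : ∀ s ∈ S, k < n s := fun s hs =>
    let ⟨t, ht, hts⟩ := hS₂.exists_ne s
    (hS s hs t ht hts.symm).1.trans_lt (hS s hs t ht hts.symm).2
  set p : R → Prop := fun t => resClass R t (k + 1) = resClass R s₀ (k + 1)
  have hs₀G : s₀ ∈ S.filter p := Finset.mem_filter.2 ⟨hs₀, rfl⟩
  have hG : ∀ s ∈ S.filter p, ∀ t ∈ S.filter p, s ≠ t →
      k + 1 ≤ mval R (s - t) ∧ mval R (s - t) < n s := by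
    intro s hs t ht hst
    simp only [Finset.mem_filter, p] at hs ht
    refine ⟨?_, (hS s hs.1 t ht.1 hst).2⟩
    rw [le_mval_sub_iff_resClass_eq hst, hs.2, ht.2]
  have hcross : ∀ s ∈ S, ∀ t ∈ S, ¬(p s ↔ p t) → partitionEntry n s t - k = 0 := by
    intro s hs t ht hpst
    have hst : s ≠ t := by rintro rfl; exact hpst Iff.rfl
    rw [partitionEntry_of_ne n hst, Nat.sub_eq_zero_iff_le, ← Nat.lt_add_one_iff, ← not_le,
      le_mval_sub_iff_resClass_eq hst]
    exact fun hcls => hpst (by simp only [p, hcls])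
  have hμG : ∑ s ∈ S.filter p, (n s - (k + 1)) < μ := hμ ▸ calc
    _ < ∑ s ∈ S.filter p, (n s - k) := Finset.sum_lt_sum_of_nonempty ⟨s₀, hs₀G⟩
      fun s hs => by have := hk s (Finset.mem_filter.1 hs).1; omega
    _ ≤ ∑ s ∈ S, (n s - k) := Finset.sum_le_sum_of_subset (Finset.filter_subset _ _)
  have hμT : ∑ s ∈ S.filter (¬ p ·), (n s - k) < μ := hμ ▸
    Finset.sum_lt_sum_of_subset (Finset.filter_subset _ _) hs₀
      (by simp [Finset.mem_filter, p]) (Nat.sub_pos_of_lt (hk s₀ hs₀)) fun _ _ _ => Nat.zero_le _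
  obtain ⟨m₁, e₁, h₁⟩ := ih _ hμG (k + 1) _ hG rfl
  have h₁' := h₁.sub_of_sub_add_one fun s hs t ht => by
    rcases eq_or_ne s t with rfl | hst
    · simpa using hk s (Finset.mem_filter.1 hs).1
    · simpa [partitionEntry_of_ne n hst] using (hG s hs t ht hst).1
  obtain ⟨m₂, e₂, h₂, he₂⟩ : ∃ m e,
      IsRowEqualizer (fun s t => partitionEntry n s t - k) (S.filter (¬ p ·)) m e ∧ 0 < e := by
    rcases (S.filter (¬ p ·)).eq_empty_or_nonempty with hT | ⟨t, ht⟩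
    · exact ⟨1, 1, by simp [hT, IsRowEqualizer], one_pos⟩
    obtain ⟨m, e, h⟩ := ih _ hμT k _
      (fun s hs t ht => hS s (Finset.mem_filter.1 hs).1 t (Finset.mem_filter.1 ht).1) rfl
    exact ⟨m, e, h, h.pos ht (by simpa using hk t (Finset.mem_filter.1 ht).1)⟩
  exact ⟨_, _, h₁'.glue h₂ (h₁'.pos hs₀G (by simpa using hk s₀ hs₀)) he₂ hcross⟩

theorem mval_sub_lt_of_isolating {S : Finset R} {n : R → ℕ}
    (hsingle : ∀ s ∈ S, resClass R s (n s) ∩ S = {s}) {s t : R} (hs : s ∈ S) (ht : t ∈ S)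
    (hst : s ≠ t) : mval R (s - t) < n s := by
  by_contra! h
  have hts : t ∈ resClass R s (n s) :=
    mem_resClass_comm.1 ((le_mval_sub_iff_mem_resClass hst _).1 h)
  exact hst ((hsingle s hs).subset ⟨hts, ht⟩).symm

theorem mval_sub_eq_partitionEntry_of_poor {S : Finset R} {n : R → ℕ}
    (hsingle : ∀ s ∈ S, resClass R s (n s) ∩ S = {s}) {r s t : R} (hs : s ∈ S) (ht : t ∈ S)
    (hr : r ∈ resClass R s (n s)) (hpoor : resClass R r (n s + 1) ∩ S = ∅) :
    mval R (r - t) = partitionEntry n s t := by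
  have hrt : r ≠ t := by
    rintro rfl
    exact hpoor.subset ⟨mem_resClass_self r _, ht⟩
  rcases eq_or_ne s t with rfl | hst
  · have hle := (le_mval_sub_iff_mem_resClass hrt _).2 hr
    have hlt : ¬n s + 1 ≤ mval R (r - s) := fun h =>
      hpoor.subset ⟨mem_resClass_comm.1 ((le_mval_sub_iff_mem_resClass hrt _).1 h), hs⟩
    rw [partitionEntry_self]
    omega
  · have hst' : s - t ≠ 0 := sub_ne_zero.2 hst
    apply Nat.cast_injective (R := ℕ∞)
    rw [partitionEntry_of_ne n hst, mval_eq_addVal (sub_ne_zero.2 hrt), mval_eq_addVal hst',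
      ← sub_add_sub_cancel r s t]
    refine (addVal R).map_add_eq_of_lt_right ?_
    calc addVal R (s - t) = mval R (s - t) := (mval_eq_addVal hst').symm
      _ < n s := by exact_mod_cast mval_sub_lt_of_isolating hsingle hs ht hst
      _ ≤ addVal R (r - s) := (mem_maximalIdeal_pow_iff_le_addVal _ _).1 hr

theorem vR_eval_prod_X_sub_C_pow (S : Finset R) (m : R → ℕ) {r : R} (hr : r ∉ S) :
    vR R ((∏ t ∈ S, (X - C t) ^ m t).eval r) = ((∑ t ∈ S, m t * mval R (r - t) : ℕ) : ℕ∞) := by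
  simp only [eval_prod, eval_pow, eval_sub, eval_X, eval_C]
  exact vR_prod_pow S _ m fun t ht => sub_ne_zero.2 (by rintro rfl; exact hr ht)

end Equalizing

theorem statement15_general (R : Type*) [CommRing R] [IsDomain R] [IsDiscreteValuationRing R]
    (S : Finset R) (hS : IsBalanced R S) :
    ∃ m : R → ℕ, (∀ s ∈ S, 0 < m s) ∧ ∃ e : ℕ,
      ∀ ρ : R → ℕ, IsSPartition R S ρ →
        ∀ r : R, IsPoorElt R S ρ r →
          vR R ((∏ s ∈ S, (Polynomial.X - Polynomial.C s) ^ m s).eval r) = (e : ℕ∞) := by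
  obtain ⟨-, n, hmin, -, hcov⟩ := hS
  have hsingle : ∀ s ∈ S, resClass R s (n s) ∩ S = {s} := fun s hs => (hmin s hs).1
  obtain ⟨m, e, hm⟩ := exists_isRowEqualizer_partitionEntry n 0 S fun s hs t ht hst =>
    ⟨Nat.zero_le _, mval_sub_lt_of_isolating hsingle hs ht hst⟩
  refine ⟨m, hm.1, e, fun ρ hρ r ⟨s, hs, hr, hpoor⟩ => ?_⟩
  have hρs : ρ s = n s :=
    le_antisymm (hρ.le_of_isolating hsingle hs) (hρ.le_of_isolating_cover hsingle hcov hs)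
  rw [hρs] at hr hpoor
  have hrS : r ∉ S := fun h => hpoor.subset ⟨mem_resClass_self r _, h⟩
  rw [vR_eval_prod_X_sub_C_pow S m hrS, ← hm.2 s hs]
  congr 1
  refine Finset.sum_congr rfl fun t ht => ?_
  rw [mval_sub_eq_partitionEntry_of_poor hsingle hs ht hr hpoor]
  rfl

/-- For every balanced set `S ⊆ R` there are positive integers
`(m s)_{s ∈ S}` and a non-negative integer `e` such that `f = ∏_{s ∈ S}(x - s)^{m s}`
satisfies `v (f r) = e` for every `r` lying in any `S`-poor neighborhood of `C_S`. -/
theorem statement15 (R : Type*) [CommRing R] [IsDomain R] [IsDiscreteValuationRing R]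
    [Finite (IsLocalRing.ResidueField R)]
    (S : Finset R) (hS : IsBalanced R S) :
    ∃ m : R → ℕ, (∀ s ∈ S, 0 < m s) ∧ ∃ e : ℕ,
      ∀ ρ : R → ℕ, IsSPartition R S ρ →
        ∀ r : R, IsPoorElt R S ρ r →
          vR R ((∏ s ∈ S, (Polynomial.X - Polynomial.C s) ^ m s).eval r) = (e : ℕ∞) :=
  statement15_general R S hS
end

section
/- Let n ≥ 1 and let A ∈ ℚ^{n×n} be a matrix with det(A) ≠ 0 such that the linear system A·x = (1,…,1)^T has a solution x ∈ ℚ^n all of whose coordinates are positive. Then det(A + J) ≠ 0, where J is the n×n matrix all of whose entries equal 1. -/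
open Polynomial

namespace Matrix

variable {m α : Type*} [Fintype m] [DecidableEq m] [CommRing α]

theorem det_one_add_vecMulVec (u v : m → α) : (1 + vecMulVec u v).det = 1 + v ⬝ᵥ u := by
  rw [vecMulVec_eq Unit, det_one_add_replicateCol_mul_replicateRow]

/-- A form of the matrix determinant lemma that needs no invertibility of `A`:
`A + u vᵀ = A (1 + x vᵀ)`. -/
theorem det_add_vecMulVec_of_mulVec_eq {A : Matrix m m α} {x u : m → α} (h : A *ᵥ x = u)
    (v : m → α) : (A + vecMulVec u v).det = A.det * (1 + v ⬝ᵥ x) := by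
  rw [← det_one_add_vecMulVec, ← det_mul, Matrix.mul_add, Matrix.mul_one, mul_vecMulVec, h]

end Matrix

theorem statement17_general (n : ℕ) (A : Matrix (Fin n) (Fin n) ℚ) (hA : A.det ≠ 0)
    (x : Fin n → ℚ) (hx : ∀ i, 0 < x i) (hAx : A.mulVec x = fun _ => 1) :
    (A + Matrix.of fun _ _ : Fin n => (1 : ℚ)).det ≠ 0 := by
  have hJ : (Matrix.of fun _ _ : Fin n => (1 : ℚ)) = Matrix.vecMulVec (fun _ => 1) 1 := by
    ext i j
    simp [Matrix.vecMulVec_apply]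
  have hsum : 0 < 1 + (1 : Fin n → ℚ) ⬝ᵥ x := by
    rw [one_dotProduct]
    exact add_pos_of_pos_of_nonneg one_pos (Finset.sum_nonneg fun i _ => (hx i).le)
  rw [hJ, Matrix.det_add_vecMulVec_of_mulVec_eq hAx]
  exact mul_ne_zero hA hsum.ne'

/-- If `A ∈ ℚ^{n×n}` has nonzero determinant and `A · x = (1,…,1)ᵀ` has a
coordinatewise positive rational solution, then `det (A + J) ≠ 0` where `J` is the all-ones
matrix. -/
theorem statement17 (n : ℕ) (hn : 1 ≤ n) (A : Matrix (Fin n) (Fin n) ℚ) (hA : A.det ≠ 0)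
    (x : Fin n → ℚ) (hx : ∀ i, 0 < x i) (hAx : A.mulVec x = fun _ => 1) :
    (A + Matrix.of fun _ _ : Fin n => (1 : ℚ)).det ≠ 0 :=
  statement17_general n A hA x hx hAx
end

section
/- Let (R,M) be a discrete valuation domain with finite residue field and valuation v, let C be an M-adic partition of R consisting of more than one block, and let T be a set of representatives of C, so C = {t + M^{n_t} : t ∈ T} with pairwise disjoint blocks covering R. Then the partition matrix A = (a_{s,t})_{s,t∈T} of C, with a_{t,t} = n_t and a_{s,t} = v(s−t) for s ≠ t, satisfies det(A) ≠ 0. -/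
/-!
Since `v(s - t) = #{k ≥ 1 : s ≡ t mod M ^ k}`, the partition matrix `A` is the sum over the
levels `k ≥ 1` of the matrices `[k ≤ n s ∧ k ≤ n t ∧ s ≡ t mod M ^ k]`. Each of them is the Gram
matrix of the residue classes modulo `M ^ k` of the `s` with `n s ≥ k`, so `xᵀ A x` is a sum of
squares of class sums `∑ x s`. At level `k = n s` the block of `s` contains no other element of
`T`, so `x s ^ 2` is one of these squares: `A` is positive definite, hence nonsingular.
-/

open Polynomial

open IsLocalRing Finset Matrix

theorem Finset.sum_sum_ite_eq_sum_sq {ι κ A : Type*} [CommRing A] [DecidableEq κ]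
    (s : Finset ι) (f : ι → κ) (y : ι → A) :
    ∑ i ∈ s, ∑ j ∈ s, (if f i = f j then y i * y j else 0) =
      ∑ b ∈ s.image f, (∑ i ∈ s with f i = b, y i) ^ 2 := by
  calc ∑ i ∈ s, ∑ j ∈ s, (if f i = f j then y i * y j else 0)
      = ∑ i ∈ s, y i * ∑ j ∈ s with f j = f i, y j := by
        refine sum_congr rfl fun i _ => ?_
        rw [sum_filter, mul_sum]
        exact sum_congr rfl fun j _ => by simp only [eq_comm, mul_ite, mul_zero]
    _ = ∑ b ∈ s.image f, ∑ i ∈ s with f i = b, y i * ∑ j ∈ s with f j = b, y j := by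
        rw [← sum_fiberwise_of_maps_to (fun i hi => mem_image_of_mem f hi)]
        refine sum_congr rfl fun b _ => sum_congr rfl fun i hi => ?_
        rw [(mem_filter.mp hi).2]
    _ = ∑ b ∈ s.image f, (∑ i ∈ s with f i = b, y i) ^ 2 := by
        simp only [sq, sum_mul]

theorem Matrix.det_ne_zero_of_dotProduct_mulVec_pos {ι A : Type*} [Fintype ι] [DecidableEq ι]
    [CommRing A] [IsDomain A] [PartialOrder A] {M : Matrix ι ι A}
    (hM : ∀ x ≠ 0, 0 < x ⬝ᵥ M *ᵥ x) : M.det ≠ 0 := fun hdet => by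
  obtain ⟨x, hx, hMx⟩ := exists_mulVec_eq_zero_iff.mpr hdet
  simpa [hMx] using hM x hx

theorem Int.sum_Icc_ite_le {e : ℤ} {N : ℕ} (he : 0 ≤ e) (heN : e ≤ N) :
    ∑ k ∈ Icc 1 N, (if (k : ℤ) ≤ e then 1 else 0 : ℤ) = e := by
  lift e to ℕ using he
  have : (Icc 1 N).filter (fun k : ℕ => (k : ℤ) ≤ e) = Icc 1 e := by
    ext k; simp only [mem_filter, mem_Icc, Nat.cast_le]; omega
  rw [sum_boole, this, Nat.card_Icc, Nat.add_sub_cancel]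

section Valuation

variable {R : Type*} [CommRing R] [IsLocalRing R]

theorem sub_notMem_pow_of_disjoint_resClass {s t : R} {a b : ℕ}
    (h : Disjoint (resClass R s a) (resClass R t b)) :
    s - t ∉ maximalIdeal R ^ a ∧ s - t ∉ maximalIdeal R ^ b := by
  have hs : s ∈ resClass R s a := by simp [resClass]
  have ht : t ∈ resClass R t b := by simp [resClass]
  refine ⟨fun hst => Set.disjoint_left.mp h ?_ ht, fun hst => Set.disjoint_left.mp h hs hst⟩
  show t - s ∈ maximalIdeal R ^ a
  rw [← neg_sub]
  exact neg_mem hst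

variable [IsNoetherianRing R]

theorem bddAbove_setOf_mem_maximalIdeal_pow {x : R} (hx : x ≠ 0) :
    BddAbove {k : ℕ | x ∈ maximalIdeal R ^ k} := by
  have hinf :=
    Ideal.iInf_pow_eq_bot_of_isLocalRing (maximalIdeal R) (maximalIdeal.isMaximal R).ne_top
  obtain ⟨N, hN⟩ : ∃ N : ℕ, x ∉ maximalIdeal R ^ N := by
    by_contra! h
    exact hx (by simpa [hinf] using Submodule.mem_iInf _ |>.mpr h)
  exact ⟨N, fun k hk => le_of_not_gt fun hNk => hN (Ideal.pow_le_pow_right hNk.le hk)⟩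

theorem mem_maximalIdeal_pow_iff_le_mval {x : R} (hx : x ≠ 0) {k : ℕ} :
    x ∈ maximalIdeal R ^ k ↔ k ≤ mval R x := by
  refine ⟨fun hk => le_csSup (bddAbove_setOf_mem_maximalIdeal_pow hx) hk, fun hk => ?_⟩
  have hmem : x ∈ maximalIdeal R ^ mval R x :=
    Nat.sSup_mem ⟨0, by simp⟩ (bddAbove_setOf_mem_maximalIdeal_pow hx)
  exact Ideal.pow_le_pow_right hk hmem

end Valuation

section PartitionMatrix

open scoped Classical

variable {R : Type*} [CommRing R] [IsLocalRing R] [IsNoetherianRing R] {T : Finset R} {n : R → ℕ}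

theorem natCast_le_partitionMatrix_iff
    (hdisj : ∀ s ∈ T, ∀ t ∈ T, s ≠ t → Disjoint (resClass R s (n s)) (resClass R t (n t)))
    (s t : T) (k : ℕ) :
    (k : ℤ) ≤ partitionMatrix R T n s t ↔
      k ≤ n s ∧ k ≤ n t ∧ (s : R) - t ∈ maximalIdeal R ^ k := by
  simp only [partitionMatrix, of_apply]
  split_ifs with hst
  · simp [hst]
  · obtain ⟨hs, ht⟩ := sub_notMem_pow_of_disjoint_resClass (hdisj s s.2 t t.2 hst)
    rw [mem_maximalIdeal_pow_iff_le_mval (sub_ne_zero.mpr hst)] at hs ht ⊢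
    omega

theorem partitionMatrix_apply_eq_sum
    (hdisj : ∀ s ∈ T, ∀ t ∈ T, s ≠ t → Disjoint (resClass R s (n s)) (resClass R t (n t)))
    {N : ℕ} (hN : ∀ s ∈ T, n s ≤ N) (s t : T) :
    partitionMatrix R T n s t = ∑ k ∈ Icc 1 N,
      if k ≤ n s ∧ k ≤ n t ∧ (s : R) - t ∈ maximalIdeal R ^ k then 1 else 0 := by
  obtain ⟨e, he⟩ : ∃ e : ℕ, partitionMatrix R T n s t = e := by
    simp only [partitionMatrix, of_apply]
    split_ifs <;> exact ⟨_, rfl⟩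
  have hes : e ≤ n s := ((natCast_le_partitionMatrix_iff hdisj s t e).mp he.ge).1
  simp_rw [← natCast_le_partitionMatrix_iff hdisj, he]
  exact (Int.sum_Icc_ite_le (Nat.cast_nonneg e) (by exact_mod_cast hes.trans (hN s s.2))).symm

theorem dotProduct_mulVec_partitionMatrix
    (hdisj : ∀ s ∈ T, ∀ t ∈ T, s ≠ t → Disjoint (resClass R s (n s)) (resClass R t (n t)))
    {N : ℕ} (hN : ∀ s ∈ T, n s ≤ N) (x : T → ℤ) :
    x ⬝ᵥ partitionMatrix R T n *ᵥ x =
      ∑ k ∈ Icc 1 N, ∑ b ∈ univ.image (fun s : T => Ideal.Quotient.mk (maximalIdeal R ^ k) s),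
        (∑ s ∈ univ.filter (fun s : T => Ideal.Quotient.mk (maximalIdeal R ^ k) s = b),
          if k ≤ n s then x s else 0) ^ 2 := by
  simp_rw [← sum_sum_ite_eq_sum_sq]
  simp only [dotProduct, mulVec, partitionMatrix_apply_eq_sum hdisj hN, mul_sum, sum_mul]
  refine (sum_congr rfl fun s _ => sum_comm).trans <| sum_comm.trans <|
    sum_congr rfl fun k _ => sum_congr rfl fun s _ => sum_congr rfl fun t _ => ?_
  rw [Ideal.Quotient.eq]
  split_ifs <;> simp_all

theorem dotProduct_mulVec_partitionMatrix_pos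
    (hdisj : ∀ s ∈ T, ∀ t ∈ T, s ≠ t → Disjoint (resClass R s (n s)) (resClass R t (n t)))
    (hpos : ∀ s ∈ T, 0 < n s) {x : T → ℤ} (hx : x ≠ 0) :
    0 < x ⬝ᵥ partitionMatrix R T n *ᵥ x := by
  obtain ⟨s₀, hs₀⟩ := Function.ne_iff.mp hx
  set π : T → R ⧸ maximalIdeal R ^ n s₀ := fun s => Ideal.Quotient.mk _ s
  have hfiber : ({s | π s = π s₀} : Finset T) = {s₀} := by
    ext s
    simp only [mem_filter, mem_univ, true_and, mem_singleton, π, Ideal.Quotient.eq]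
    refine ⟨fun hs => ?_, fun hs => by simp [hs]⟩
    by_contra hne
    exact (sub_notMem_pow_of_disjoint_resClass (hdisj s s.2 s₀ s₀.2 (by simpa using hne))).2 hs
  rw [dotProduct_mulVec_partitionMatrix hdisj (fun s hs => le_sup (f := n) hs)]
  refine lt_of_lt_of_le ?_ <| single_le_sum (fun _ _ => sum_nonneg fun _ _ => sq_nonneg _)
    (mem_Icc.mpr ⟨hpos s₀ s₀.2, le_sup (f := n) s₀.2⟩)
  refine lt_of_lt_of_le ?_ <|
    single_le_sum (fun _ _ => sq_nonneg _) (mem_image_of_mem π (mem_univ s₀))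
  rw [hfiber, sum_singleton, if_pos le_rfl]
  exact sq_pos_iff.mpr hs₀

end PartitionMatrix

open scoped Classical in
theorem statement18_general (R : Type*) [CommRing R] [IsDomain R] [IsDiscreteValuationRing R]
    (T : Finset R) (n : R → ℕ)
    (hdisj : ∀ s ∈ T, ∀ t ∈ T, s ≠ t → Disjoint (resClass R s (n s)) (resClass R t (n t)))
    (hcard : 1 < T.card) :
    (partitionMatrix R T n).det ≠ 0 := by
  have hpos : ∀ s ∈ T, 0 < n s := fun s hs => by
    obtain ⟨t, ht, hts⟩ := exists_mem_ne hcard s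
    refine Nat.pos_of_ne_zero fun hs0 => ?_
    exact (sub_notMem_pow_of_disjoint_resClass (hdisj s hs t ht hts.symm)).1 (by simp [hs0])
  exact det_ne_zero_of_dotProduct_mulVec_pos fun x hx =>
    dotProduct_mulVec_partitionMatrix_pos hdisj hpos hx

open scoped Classical in
/-- The partition matrix of an `M`-adic partition of `R` with more than
one block has nonzero determinant. -/
theorem statement18 (R : Type*) [CommRing R] [IsDomain R] [IsDiscreteValuationRing R]
    [Finite (IsLocalRing.ResidueField R)]
    (T : Finset R) (n : R → ℕ)
    (hdisj : ∀ s ∈ T, ∀ t ∈ T, s ≠ t → Disjoint (resClass R s (n s)) (resClass R t (n t)))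
    (hcover : (⋃ t ∈ T, resClass R t (n t)) = Set.univ)
    (hcard : 1 < T.card) :
    (partitionMatrix R T n).det ≠ 0 :=
  statement18_general R T n hdisj hcard
end
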